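/- arXiv:2110.08616 — 4 statements merged into one kernel-verified Lean document; each statement's English description precedes it below -/
import Mathlib

section
/- Let E be a finite-dimensional real normed vector space, let G = EuclideanSpace ℝ (Fin o), let y ∈ G, let C > 0, let F : E → G be differentiable at a point θ*, and define L : E → ℝ by L(θ) = (C/2)·‖F(θ) − y‖². If the Fréchet derivative of L at θ* is zero and the Fréchet derivative of F at θ* is surjective, then L(θ*) = 0 and L(θ*) ≤ L(θ) for every θ ∈ E; in particular θ* is a global minimizer and not a saddle point. -/
/-!
The derivative of `θ ↦ c‖F θ - y‖²` at `θ*` is `v ↦ 2c ⟪F θ* - y, DF(θ*) v⟫`. If it vanishes and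
`DF(θ*)` is surjective, then `F θ* - y` is orthogonal to every vector, hence to itself, so
`F θ* = y`: the loss attains its lower bound `0` at every critical point.
-/

open Function

section

variable {E G : Type*} [NormedAddCommGroup E] [NormedSpace ℝ E]
  [NormedAddCommGroup G] [InnerProductSpace ℝ G]

theorem eq_zero_of_innerSL_comp_eq_zero_of_surjective {v : G} {T : E →L[ℝ] G}
    (hT : Surjective T) (h : (innerSL ℝ v).comp T = 0) : v = 0 := by
  obtain ⟨u, hu⟩ := hT v
  have hvv : inner ℝ v v = 0 := by
    simpa [hu] using DFunLike.congr_fun h u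
  exact inner_self_eq_zero.mp hvv

theorem eq_of_fderiv_const_mul_norm_sub_sq_eq_zero {F : E → G} {F' : E →L[ℝ] G} {x : E}
    (hF : HasFDerivAt F F' x) (hF' : Surjective F') (y : G) {c : ℝ} (hc : c ≠ 0)
    (hcrit : fderiv ℝ (fun θ => c * ‖F θ - y‖ ^ 2) x = 0) : F x = y := by
  have hderiv := ((hF.sub_const y).norm_sq.const_mul c).fderiv
  rw [hcrit, eq_comm, ← ofNat_smul_eq_nsmul ℝ 2, smul_smul, smul_eq_zero] at hderiv
  rw [← sub_eq_zero]
  exact eq_zero_of_innerSL_comp_eq_zero_of_surjective hF'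
    (hderiv.resolve_left (mul_ne_zero hc two_ne_zero))

end

theorem stmt_2_general {E : Type*}
    [NormedAddCommGroup E] [NormedSpace ℝ E]
    {o : ℕ} (y : EuclideanSpace ℝ (Fin o)) (C : ℝ) (hC : 0 < C)
    (F : E → EuclideanSpace ℝ (Fin o)) (θstar : E)
    (hF : DifferentiableAt ℝ F θstar)
    (L : E → ℝ) (hL : ∀ θ, L θ = (C / 2) * ‖F θ - y‖ ^ 2)
    (hcrit : fderiv ℝ L θstar = 0)
    (hsurj : Function.Surjective (fderiv ℝ F θstar)) :
    L θstar = 0 ∧ ∀ θ : E, L θstar ≤ L θ := by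
  rw [funext hL] at hcrit
  have hFy : F θstar = y :=
    eq_of_fderiv_const_mul_norm_sub_sq_eq_zero hF.hasFDerivAt hsurj y (by positivity) hcrit
  have hL0 : L θstar = 0 := by simp [hL, hFy]
  exact ⟨hL0, fun θ => by rw [hL0, hL]; positivity⟩

/-- Lemma 1 (no-saddle-point part): for the sample-wise loss
`L θ = (C/2)·‖F θ − y‖²` with `C > 0`, a critical point `θ*` of `L` at which the
Fréchet derivative of `F` is surjective achieves `L θ* = 0` and is a global
minimizer; in particular it is not a saddle point. -/
theorem stmt_2 {E : Type*}
    [NormedAddCommGroup E] [NormedSpace ℝ E] [FiniteDimensional ℝ E]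
    {o : ℕ} (y : EuclideanSpace ℝ (Fin o)) (C : ℝ) (hC : 0 < C)
    (F : E → EuclideanSpace ℝ (Fin o)) (θstar : E)
    (hF : DifferentiableAt ℝ F θstar)
    (L : E → ℝ) (hL : ∀ θ, L θ = (C / 2) * ‖F θ - y‖ ^ 2)
    (hcrit : fderiv ℝ L θstar = 0)
    (hsurj : Function.Surjective (fderiv ℝ F θstar)) :
    L θstar = 0 ∧ ∀ θ : E, L θstar ≤ L θ :=
  stmt_2_general y C hC F θstar hF L hL hcrit hsurj
end

section
/- Let E be a finite-dimensional real normed vector space, let G = EuclideanSpace ℝ (Fin o), let y ∈ G, let C > 0, let F : E → G be differentiable at a point θ*, with surjective Fréchet derivative at θ*, and define L : E → ℝ by L(θ) = (C/2)·‖F(θ) − y‖². If θ* is a local minimum of L, then F(θ*) = y, L(θ*) = 0, and L(θ*) ≤ L(θ) for every θ ∈ E; that is, every local optimum of the sample-wise loss L is a global optimum. -/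
/-! After rescaling by `2 / C`, `θ*` is a local minimum of `‖F θ - y‖²`, whose derivative
`v ↦ 2 ⟪F θ* - y, F'(θ*) v⟫` therefore vanishes. Evaluating it at a preimage under the surjective
`F'(θ*)` of the residual `F θ* - y` gives `‖F θ* - y‖² = 0`; so `L θ* = 0`, and `L ≥ 0` makes `θ*`
a global minimum. -/

theorem eq_zero_of_isLocalMin_norm_sq {E G : Type*} [NormedAddCommGroup E] [NormedSpace ℝ E]
    [NormedAddCommGroup G] [InnerProductSpace ℝ G] {f : E → G} {f' : E →L[ℝ] G} {x : E}
    (hf : HasFDerivAt f f' x) (hsurj : Function.Surjective f')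
    (hmin : IsLocalMin (fun x => ‖f x‖ ^ 2) x) : f x = 0 := by
  obtain ⟨v, hv⟩ := hsurj (f x)
  have hderiv : 2 • (innerSL ℝ (f x)).comp f' = 0 := hmin.hasFDerivAt_eq_zero hf.norm_sq
  have h : 2 * inner ℝ (f x) (f x) = 0 := by
    simpa [hv] using DFunLike.congr_fun hderiv v
  simpa using h

theorem stmt_3_general {E : Type*}
    [NormedAddCommGroup E] [NormedSpace ℝ E]
    {o : ℕ} (y : EuclideanSpace ℝ (Fin o)) (C : ℝ) (hC : 0 < C)
    (F : E → EuclideanSpace ℝ (Fin o)) (θstar : E)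
    (hF : DifferentiableAt ℝ F θstar)
    (hsurj : Function.Surjective (fderiv ℝ F θstar))
    (L : E → ℝ) (hL : ∀ θ, L θ = (C / 2) * ‖F θ - y‖ ^ 2)
    (hmin : IsLocalMin L θstar) :
    F θstar = y ∧ L θstar = 0 ∧ ∀ θ : E, L θstar ≤ L θ := by
  have hmin_sq : IsLocalMin (fun θ => ‖F θ - y‖ ^ 2) θstar := by
    have hscale : Monotone fun t : ℝ => (2 / C) * t :=
      fun _ _ h => mul_le_mul_of_nonneg_left h (by positivity)
    convert hmin.comp_mono hscale using 2 with θ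
    simp only [Function.comp_apply, hL]
    field_simp
  have hFy : F θstar = y := by
    have := eq_zero_of_isLocalMin_norm_sq (hF.hasFDerivAt.sub_const y) hsurj hmin_sq
    exact sub_eq_zero.mp this
  have hL0 : L θstar = 0 := by simp [hL, hFy]
  exact ⟨hFy, hL0, fun θ => by rw [hL0, hL θ]; positivity⟩

/-- Lemma 1 (every local optimum is a global optimum): for the sample-wise loss
`L θ = (C/2)·‖F θ − y‖²` with `C > 0`, a local minimum `θ*` of `L` at which `F`
is differentiable with surjective Fréchet derivative satisfies `F θ* = y`,
`L θ* = 0`, and `L θ* ≤ L θ` for every `θ`. -/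
theorem stmt_3 {E : Type*}
    [NormedAddCommGroup E] [NormedSpace ℝ E] [FiniteDimensional ℝ E]
    {o : ℕ} (y : EuclideanSpace ℝ (Fin o)) (C : ℝ) (hC : 0 < C)
    (F : E → EuclideanSpace ℝ (Fin o)) (θstar : E)
    (hF : DifferentiableAt ℝ F θstar)
    (hsurj : Function.Surjective (fderiv ℝ F θstar))
    (L : E → ℝ) (hL : ∀ θ, L θ = (C / 2) * ‖F θ - y‖ ^ 2)
    (hmin : IsLocalMin L θstar) :
    F θstar = y ∧ L θstar = 0 ∧ ∀ θ : E, L θstar ≤ L θ :=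
  stmt_3_general y C hC F θstar hF hsurj L hL hmin
end

section
/- Let n, m ≥ 1, let θ : Fin n → (Fin m → ℝ), and suppose x ∈ convexHull ℝ (range θ). Writing ‖v‖₁ = Σ_{k ∈ Fin m} |v(k)| for the ℓ1 norm on Fin m → ℝ, one has Σ_{i ∈ Fin n} ‖x − θ(i)‖₁² ≤ (Σ_{i ∈ Fin n} Σ_{j ∈ Fin n} ‖θ(i) − θ(j)‖₁)². -/
/-!
The ℓ1 distance is the distance of `PiLp 1`, so the statement holds in any real normed space.
Distance to `θ i` is convex, hence on the convex hull it is maximised at some vertex `θ j`;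
thus `dist x (θ i) ≤ ∑ j, dist (θ i) (θ j) =: S i`, and `∑ S i ^ 2 ≤ (∑ S i) ^ 2` since `S ≥ 0`.
-/

open Finset

section NormedSpace

variable {E ι : Type*} [SeminormedAddCommGroup E] [NormedSpace ℝ E] [Fintype ι]

theorem dist_le_sum_dist_of_mem_convexHull {θ : ι → E} {x : E}
    (hx : x ∈ convexHull ℝ (Set.range θ)) (i : ι) :
    dist x (θ i) ≤ ∑ j, dist (θ i) (θ j) := by
  obtain ⟨_, ⟨j, rfl⟩, hj⟩ := convexHull_exists_dist_ge hx (θ i)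
  calc dist x (θ i) ≤ dist (θ i) (θ j) := hj.trans_eq (dist_comm _ _)
    _ ≤ ∑ j, dist (θ i) (θ j) :=
      single_le_sum (f := fun j ↦ dist (θ i) (θ j)) (fun _ _ ↦ dist_nonneg) (mem_univ j)

theorem sum_sq_dist_le_sq_sum_dist_of_mem_convexHull {θ : ι → E} {x : E}
    (hx : x ∈ convexHull ℝ (Set.range θ)) :
    ∑ i, dist x (θ i) ^ 2 ≤ (∑ i, ∑ j, dist (θ i) (θ j)) ^ 2 :=
  calc ∑ i, dist x (θ i) ^ 2 ≤ ∑ i, (∑ j, dist (θ i) (θ j)) ^ 2 :=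
        sum_le_sum fun i _ ↦
          pow_le_pow_left₀ dist_nonneg (dist_le_sum_dist_of_mem_convexHull hx i) 2
    _ ≤ (∑ i, ∑ j, dist (θ i) (θ j)) ^ 2 :=
        sum_sq_le_sq_sum_of_nonneg fun _ _ ↦ sum_nonneg fun _ _ ↦ dist_nonneg

end NormedSpace

theorem sum_abs_sub_eq_dist_toLp {ι : Type*} [Fintype ι] (u v : ι → ℝ) :
    ∑ k, |u k - v k| = dist (WithLp.toLp 1 u) (WithLp.toLp 1 v) := by
  simp [PiLp.dist_eq_of_L1, Real.dist_eq]

theorem stmt_6_general (n m : ℕ)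
    (θ : Fin n → (Fin m → ℝ)) (x : Fin m → ℝ)
    (hx : x ∈ convexHull ℝ (Set.range θ)) :
    ∑ i : Fin n, (∑ k : Fin m, |x k - θ i k|) ^ 2 ≤
      (∑ i : Fin n, ∑ j : Fin n, ∑ k : Fin m, |θ i k - θ j k|) ^ 2 := by
  have hx₁ : WithLp.toLp 1 x ∈ convexHull ℝ (Set.range (WithLp.toLp 1 ∘ θ)) := by
    rw [Set.range_comp]
    exact (LinearMap.image_convexHull
      (WithLp.linearEquiv 1 ℝ (Fin m → ℝ)).symm.toLinearMap _).subset (Set.mem_image_of_mem _ hx)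
  simp only [sum_abs_sub_eq_dist_toLp]
  exact sum_sq_dist_le_sq_sum_dist_of_mem_convexHull hx₁

/-- Summed inequality (Eq. (15)–(17) of Theorem 2): for a point `x` in the
convex hull of `n` points of `ℝ^m`, the sum of squared ℓ1 distances from `x` to
the points is bounded by the square of the sum of all pairwise ℓ1 distances,
where `‖v‖₁ = ∑ k, |v k|`. -/
theorem stmt_6 (n m : ℕ) (hn : 1 ≤ n) (hm : 1 ≤ m)
    (θ : Fin n → (Fin m → ℝ)) (x : Fin m → ℝ)
    (hx : x ∈ convexHull ℝ (Set.range θ)) :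
    ∑ i : Fin n, (∑ k : Fin m, |x k - θ i k|) ^ 2 ≤
      (∑ i : Fin n, ∑ j : Fin n, ∑ k : Fin m, |θ i k - θ j k|) ^ 2 :=
  stmt_6_general n m θ x hx
end

section
/- Let n, m ≥ 1 and H ≥ 0. Let θ*, θ₁*, …, θₙ* ∈ EuclideanSpace ℝ (Fin m) with θ* ∈ convexHull ℝ {θ₁*, …, θₙ*}. For each i ∈ [n], let lᵢ : EuclideanSpace ℝ (Fin m) → ℝ be differentiable with lᵢ(θᵢ*) = 0, fderiv ℝ lᵢ θᵢ* = 0, and the map θ ↦ fderiv ℝ lᵢ θ Lipschitz with constant H. Define Ψ = (√H / n²) · Σ_{i,j ∈ [n]} ‖θᵢ* − θⱼ*‖₁, where ‖v‖₁ = Σ_{k ∈ Fin m} |v(k)| is the ℓ1 norm of the coordinate vector. Then the training error J = (1/n) Σ_{i ∈ [n]} lᵢ(θ*) satisfies J ≤ (n³/2) · Ψ². -/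
/-!
Each sample-wise loss `lᵢ` is `H`-smooth and vanishes to first order at `θᵢ*`, so the descent
lemma gives `lᵢ(θ*) ≤ H/2 · ‖θ* − θᵢ*‖²`. Since `θ*` lies in the convex hull of the `θⱼ*`, its
distance to `θᵢ*` is at most the largest `‖θⱼ* − θᵢ*‖`, hence at most `∑ⱼ ‖θᵢ* − θⱼ*‖₁`. Summing
over `i` and using `∑ aᵢ² ≤ (∑ aᵢ)²` bounds `∑ᵢ lᵢ(θ*)` by `H/2 · (∑ᵢⱼ ‖θᵢ* − θⱼ*‖₁)²`, which is
`n⁴/2 · Ψ²`.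
-/

open Finset

lemma PiLp.norm_le_sum_norm {p : ENNReal} [Fact (1 ≤ p)] {ι : Type*} [Fintype ι] [DecidableEq ι]
    {β : ι → Type*} [∀ i, SeminormedAddCommGroup (β i)] (x : PiLp p β) :
    ‖x‖ ≤ ∑ i, ‖x i‖ :=
  calc ‖x‖ = ‖∑ i, PiLp.single p i (x i)‖ := by congr 1; ext j; simp
    _ ≤ ∑ i, ‖PiLp.single p i (x i)‖ := norm_sum_le _ _
    _ = ∑ i, ‖x i‖ := by simp only [PiLp.norm_single]

section

variable {E : Type*} [NormedAddCommGroup E] [NormedSpace ℝ E]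

theorem sub_sub_fderiv_le_of_lipschitzWith {f : E → ℝ} {K : NNReal} (hf : Differentiable ℝ f)
    (hlip : LipschitzWith K (fderiv ℝ f)) (x y : E) :
    f y - f x - fderiv ℝ f x (y - x) ≤ K / 2 * ‖y - x‖ ^ 2 := by
  set v := y - x
  -- `φ` is antitone on `[0, 1]`, and `φ 0 ≥ φ 1` is the claim.
  set φ : ℝ → ℝ := fun t => f (x + t • v) - t * fderiv ℝ f x v - K / 2 * ‖v‖ ^ 2 * t ^ 2
  have hφ : ∀ t, HasDerivAt φ (fderiv ℝ f (x + t • v) v - fderiv ℝ f x v - K * ‖v‖ ^ 2 * t) t := by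
    intro t
    have hline : HasDerivAt (fun t : ℝ => x + t • v) v t := by
      simpa using ((hasDerivAt_id t).smul_const v).const_add x
    have h := (((hf _).hasFDerivAt.comp_hasDerivAt t hline).sub
      (hasDerivAt_mul_const (fderiv ℝ f x v))).sub ((hasDerivAt_pow 2 t).const_mul (K / 2 * ‖v‖ ^ 2))
    exact h.congr_deriv (by simp only [Nat.cast_ofNat]; ring)
  have hφ' : ∀ t ∈ interior (Set.Icc (0 : ℝ) 1), deriv φ t ≤ 0 := by
    intro t ht
    rw [interior_Icc] at ht
    rw [(hφ t).deriv, sub_nonpos, ← ContinuousLinearMap.sub_apply']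
    calc (fderiv ℝ f (x + t • v) - fderiv ℝ f x) v
        ≤ ‖fderiv ℝ f (x + t • v) - fderiv ℝ f x‖ * ‖v‖ :=
          (Real.le_norm_self _).trans (ContinuousLinearMap.le_opNorm _ _)
      _ ≤ K * ‖t • v‖ * ‖v‖ := by
        gcongr
        simpa [← dist_eq_norm] using hlip.dist_le_mul (x + t • v) x
      _ = K * ‖v‖ ^ 2 * t := by rw [norm_smul, Real.norm_of_nonneg ht.1.le]; ring
  have hanti := antitoneOn_of_deriv_nonpos (convex_Icc 0 1)
    (fun t _ => (hφ t).continuousAt.continuousWithinAt)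
    (fun t _ => (hφ t).differentiableAt.differentiableWithinAt) hφ'
  have := hanti (Set.left_mem_Icc.2 zero_le_one) (Set.right_mem_Icc.2 zero_le_one) zero_le_one
  simp only [φ] at this
  norm_num [show x + v = y from add_sub_cancel x y] at this
  linarith

theorem le_of_lipschitzWith_fderiv_of_fderiv_eq_zero {f : E → ℝ} {K : NNReal}
    (hf : Differentiable ℝ f) (hlip : LipschitzWith K (fderiv ℝ f)) {x : E} (hx : f x = 0)
    (hx' : fderiv ℝ f x = 0) (y : E) :
    f y ≤ K / 2 * ‖y - x‖ ^ 2 := by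
  simpa [hx, hx'] using sub_sub_fderiv_le_of_lipschitzWith hf hlip x y

lemma norm_sub_le_sum_of_mem_convexHull {ι : Type*} [Fintype ι] {θ : ι → E} {x : E}
    (hx : x ∈ convexHull ℝ (Set.range θ)) (i : ι) : ‖x - θ i‖ ≤ ∑ j, ‖θ i - θ j‖ := by
  obtain ⟨_, ⟨j, rfl⟩, hj⟩ := convexHull_exists_dist_ge hx (θ i)
  rw [← dist_eq_norm]
  calc dist x (θ i) ≤ dist (θ j) (θ i) := hj
    _ = ‖θ i - θ j‖ := dist_eq_norm' _ _
    _ ≤ ∑ j, ‖θ i - θ j‖ :=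
      single_le_sum (f := fun j => ‖θ i - θ j‖) (fun j _ => norm_nonneg _) (mem_univ j)

end

theorem stmt_7_general (n m : ℕ)
    (H : ℝ)
    (θstar : EuclideanSpace ℝ (Fin m)) (θ : Fin n → EuclideanSpace ℝ (Fin m))
    (hhull : θstar ∈ convexHull ℝ (Set.range θ))
    (l : Fin n → EuclideanSpace ℝ (Fin m) → ℝ)
    (hdiff : ∀ i, Differentiable ℝ (l i))
    (hzero : ∀ i, l i (θ i) = 0)
    (hgrad : ∀ i, fderiv ℝ (l i) (θ i) = 0)
    (hlip : ∀ i, LipschitzWith H.toNNReal (fun ϑ => fderiv ℝ (l i) ϑ))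
    (Ψ : ℝ)
    (hΨ : Ψ = (Real.sqrt H / (n : ℝ) ^ 2) *
      ∑ i : Fin n, ∑ j : Fin n, ∑ k : Fin m, |θ i k - θ j k|) :
    (1 / (n : ℝ)) * ∑ i : Fin n, l i θstar ≤ ((n : ℝ) ^ 3 / 2) * Ψ ^ 2 := by
  set a : Fin n → ℝ := fun i => ∑ j, ∑ k, |θ i k - θ j k|
  have hdist : ∀ i, ‖θstar - θ i‖ ≤ a i := fun i =>
    (norm_sub_le_sum_of_mem_convexHull hhull i).trans <| sum_le_sum fun j _ =>
      (PiLp.norm_le_sum_norm _).trans_eq <| by simp only [PiLp.sub_apply, Real.norm_eq_abs]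
  have hloss : ∑ i, l i θstar ≤ H.toNNReal / 2 * (∑ i, a i) ^ 2 :=
    calc ∑ i, l i θstar ≤ ∑ i, H.toNNReal / 2 * a i ^ 2 := sum_le_sum fun i _ =>
          (le_of_lipschitzWith_fderiv_of_fderiv_eq_zero (hdiff i) (hlip i) (hzero i) (hgrad i) _).trans
            (by gcongr; exact hdist i)
      _ ≤ H.toNNReal / 2 * (∑ i, a i) ^ 2 := by
          rw [← mul_sum]
          gcongr
          exact sum_sq_le_sq_sum_of_nonneg fun i _ => (norm_nonneg _).trans (hdist i)
  have hΨsq : Ψ ^ 2 = H.toNNReal / (n : ℝ) ^ 4 * (∑ i, a i) ^ 2 := by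
    rw [hΨ, mul_pow, div_pow, Real.sq_sqrt', Real.coe_toNNReal']
    ring
  rcases eq_or_ne (n : ℝ) 0 with hn | hn
  · simp [hn]
  calc (1 / (n : ℝ)) * ∑ i, l i θstar ≤ 1 / n * (H.toNNReal / 2 * (∑ i, a i) ^ 2) := by gcongr
    _ = (n : ℝ) ^ 3 / 2 * Ψ ^ 2 := by rw [hΨsq]; field_simp

/-- Theorem 2: the training error `J = (1/n) ∑ i, lᵢ(θ*)` at a local optimum
`θ*` lying in the convex hull of the sample-wise local optima `θᵢ*` is bounded
by `(n³/2)·Ψ²`, where each `lᵢ` is differentiable with `H`-Lipschitz Fréchet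
derivative, vanishes together with its derivative at `θᵢ*`, and
`Ψ = (√H / n²) ∑ i j, ‖θᵢ* − θⱼ*‖₁` with `‖v‖₁ = ∑ k, |v k|`. -/
theorem stmt_7 (n m : ℕ) (hn : 1 ≤ n) (hm : 1 ≤ m)
    (H : ℝ) (hH : 0 ≤ H)
    (θstar : EuclideanSpace ℝ (Fin m)) (θ : Fin n → EuclideanSpace ℝ (Fin m))
    (hhull : θstar ∈ convexHull ℝ (Set.range θ))
    (l : Fin n → EuclideanSpace ℝ (Fin m) → ℝ)
    (hdiff : ∀ i, Differentiable ℝ (l i))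
    (hzero : ∀ i, l i (θ i) = 0)
    (hgrad : ∀ i, fderiv ℝ (l i) (θ i) = 0)
    (hlip : ∀ i, LipschitzWith H.toNNReal (fun ϑ => fderiv ℝ (l i) ϑ))
    (Ψ : ℝ)
    (hΨ : Ψ = (Real.sqrt H / (n : ℝ) ^ 2) *
      ∑ i : Fin n, ∑ j : Fin n, ∑ k : Fin m, |θ i k - θ j k|) :
    (1 / (n : ℝ)) * ∑ i : Fin n, l i θstar ≤ ((n : ℝ) ^ 3 / 2) * Ψ ^ 2 :=
  stmt_7_general n m H θstar θ hhull l hdiff hzero hgrad hlip Ψ hΨ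
end
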